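/- For f, g ∈ L²([0,T]) and p ≥ 1, ‖E(f) − E(g)‖_{L^p} ≤ C·S_p(|f − g|), where E(h) = exp(δ(h) − |h|²/2) is the stochastic exponential, S_p(λ) = λ·exp(p·λ²) + exp(λ²/2) − 1, and C depends only on p and |g|. -/

import Mathlib

/-!
Put `λ = ‖f - g‖` and `v = λ⁻¹ (f - g)`, so that `δ(f - g) = λ δ v` and `‖v‖ ≤ 1`. The bounds
`|eᵃ - eᵇ| ≤ |a - b| (eᵃ + eᵇ)` and `|x| ≤ eˣ + e⁻ˣ` dominate `|E(f) - E(g)|` by a sum of terms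
`b exp(δ k - s)`. Since `δ k` is a centred Gaussian of variance `‖k‖²`, its moment generating
function gives each term the exact `L^p` norm `b exp(p‖k‖²/2 - s)`. Collecting exponents gives
`C(p, G) = (5 + 2G) exp(p(1 + G)²)`; the `λ²` coming from `‖f‖² - ‖g‖²` is absorbed by `λ ≤ exp λ²`.
-/

open MeasureTheory ProbabilityTheory Real

noncomputable def Spoly (p l : ℝ) : ℝ :=
  l * Real.exp (p * l ^ 2) + Real.exp (l ^ 2 / 2) - 1

open NNReal ENNReal

lemma abs_exp_sub_exp_le (a b : ℝ) : |exp a - exp b| ≤ |a - b| * (exp a + exp b) := by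
  wlog hba : b ≤ a generalizing a b
  · simpa [abs_sub_comm, add_comm] using this b a (le_of_not_ge hba)
  have hsub : exp a - exp b ≤ (a - b) * exp a := by
    have h := add_one_le_exp (b - a)
    rw [exp_sub] at h
    have := exp_pos a
    rw [le_div_iff₀ this] at h
    nlinarith
  rw [abs_of_nonneg (sub_nonneg.mpr (exp_le_exp.mpr hba)), abs_of_nonneg (sub_nonneg.mpr hba)]
  nlinarith [exp_pos b, mul_nonneg (sub_nonneg.mpr hba) (exp_pos b).le]

lemma abs_le_exp_add_exp_neg (x : ℝ) : |x| ≤ exp x + exp (-x) := by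
  rcases abs_cases x with ⟨h, _⟩ | ⟨h, _⟩ <;>
    linarith [add_one_le_exp x, add_one_le_exp (-x), exp_pos x, exp_pos (-x)]

lemma abs_norm_sq_sub_norm_sq_le {E : Type*} [SeminormedAddCommGroup E] (f g : E) :
    |‖f‖ ^ 2 - ‖g‖ ^ 2| ≤ ‖f - g‖ * (2 * ‖g‖ + ‖f - g‖) := by
  have hdiff : |‖f‖ - ‖g‖| ≤ ‖f - g‖ := abs_norm_sub_norm_le f g
  have hsum : ‖f‖ + ‖g‖ ≤ 2 * ‖g‖ + ‖f - g‖ := by linarith [norm_le_norm_add_norm_sub' f g]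
  rw [show ‖f‖ ^ 2 - ‖g‖ ^ 2 = (‖f‖ - ‖g‖) * (‖f‖ + ‖g‖) by ring, abs_mul,
    abs_of_nonneg (by positivity : 0 ≤ ‖f‖ + ‖g‖)]
  exact mul_le_mul hdiff hsum (by positivity) (norm_nonneg _)

lemma exp_mul_sq_div_two_le {q R G l : ℝ} (hq : 0 ≤ q) (hR : 0 ≤ R) (hRG : R ≤ G + l) :
    exp (q * R ^ 2 / 2) ≤ exp (q * G ^ 2) * exp (q * l ^ 2) := by
  rw [← exp_add, exp_le_exp]
  have : R ^ 2 ≤ 2 * G ^ 2 + 2 * l ^ 2 := by nlinarith [sq_nonneg (G - l)]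
  nlinarith

lemma mul_exp_le_Spoly (p l : ℝ) : l * exp (p * l ^ 2) ≤ Spoly p l := by
  have : 1 ≤ exp (l ^ 2 / 2) := one_le_exp (by positivity)
  unfold Spoly
  linarith

lemma two_mul_exp_add_mul_exp_le {p l G R : ℝ} (hp : 1 ≤ p) (hl : 0 ≤ l) (hG : 0 ≤ G)
    (hR : 0 ≤ R) (hRG : R ≤ G + l) :
    2 * l * exp (p * (R + 1) ^ 2 / 2) + (l * G + l ^ 2 / 2) * exp ((p - 1) * R ^ 2 / 2)
      ≤ (5 / 2 + G) * exp (p * (1 + G) ^ 2) * (l * exp (p * l ^ 2)) := by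
  have hsplit : exp (p * l ^ 2) = exp (l ^ 2) * exp ((p - 1) * l ^ 2) := by
    rw [← exp_add]; ring_nf
  have hshift : exp (p * (R + 1) ^ 2 / 2) ≤ exp (p * (1 + G) ^ 2) * exp (p * l ^ 2) :=
    exp_mul_sq_div_two_le (by linarith) (by linarith) (by linarith : R + 1 ≤ 1 + G + l)
  have hcentred :
      exp ((p - 1) * R ^ 2 / 2) ≤ exp (p * (1 + G) ^ 2) * exp ((p - 1) * l ^ 2) := by
    refine (exp_mul_sq_div_two_le (by linarith) hR hRG).trans ?_
    gcongr <;> linarith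
  have hl_le : l ≤ exp (l ^ 2) := by nlinarith [add_one_le_exp (l ^ 2), sq_nonneg (l - 1)]
  have hcoef : (l * G + l ^ 2 / 2) * exp ((p - 1) * l ^ 2)
      ≤ (G + 1 / 2) * (l * exp (p * l ^ 2)) := by
    have h1 : exp ((p - 1) * l ^ 2) ≤ exp (p * l ^ 2) :=
      hsplit ▸ le_mul_of_one_le_left (exp_nonneg _) (one_le_exp (sq_nonneg l))
    have h2 : l * exp ((p - 1) * l ^ 2) ≤ exp (p * l ^ 2) :=
      hsplit ▸ mul_le_mul_of_nonneg_right hl_le (exp_nonneg _)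
    nlinarith [mul_le_mul_of_nonneg_left h1 (mul_nonneg hl hG), mul_le_mul_of_nonneg_left h2 hl]
  have hK := exp_pos (p * (1 + G) ^ 2)
  have hc : 0 ≤ l * G + l ^ 2 / 2 := by positivity
  nlinarith [mul_le_mul_of_nonneg_left hshift (by positivity : 0 ≤ 2 * l),
    mul_le_mul_of_nonneg_left hcentred hc, mul_le_mul_of_nonneg_left hcoef hK.le]

lemma aemeasurable_of_map_eq_gaussianReal {Ω : Type*} [MeasurableSpace Ω] {P : Measure Ω}
    {X : Ω → ℝ} {μ : ℝ} {v : ℝ≥0} (hX : P.map X = gaussianReal μ v) : AEMeasurable X P :=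
  .of_map_ne_zero (by rw [hX]; exact IsProbabilityMeasure.ne_zero _)

lemma eLpNorm_exp_of_map_eq_gaussianReal {Ω : Type*} [MeasurableSpace Ω] {P : Measure Ω}
    {X : Ω → ℝ} {μ : ℝ} {v : ℝ≥0} (hX : P.map X = gaussianReal μ v) {p : ℝ} (hp : 0 < p) :
    eLpNorm (fun ω => exp (X ω)) (ENNReal.ofReal p) P = ENNReal.ofReal (exp (μ + p * v / 2)) := by
  have hint : Integrable (fun ω => exp (p * X ω)) P := by
    have h := integrable_exp_mul_gaussianReal (μ := μ) (v := v) p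
    rw [← hX] at h
    exact h.comp_aemeasurable (aemeasurable_of_map_eq_gaussianReal hX)
  have hpow : ∀ ω, ‖exp (X ω)‖ₑ ^ p = ENNReal.ofReal (exp (p * X ω)) := fun ω => by
    rw [Real.enorm_eq_ofReal (exp_nonneg _), ofReal_rpow_of_nonneg (exp_nonneg _) hp.le,
      ← exp_mul, mul_comm]
  rw [eLpNorm_eq_lintegral_rpow_enorm_toReal (by simp [hp]) ofReal_ne_top, toReal_ofReal hp.le]
  simp_rw [hpow]
  rw [← ofReal_integral_eq_lintegral_ofReal hint (ae_of_all _ fun _ => exp_nonneg _)]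
  change ENNReal.ofReal (mgf X P p) ^ (1 / p) = _
  rw [mgf_gaussianReal hX, ofReal_rpow_of_nonneg (exp_nonneg _) (by positivity), ← exp_mul]
  congr 2
  field_simp

section Wiener

variable {H Ω : Type*} [NormedAddCommGroup H] [NormedSpace ℝ H] [MeasurableSpace Ω]
  {P : Measure Ω} {δ : H →ₗ[ℝ] Ω → ℝ}

noncomputable def stochExp (δ : H →ₗ[ℝ] Ω → ℝ) (h : H) (ω : Ω) : ℝ :=
  exp (δ h ω - ‖h‖ ^ 2 / 2)

lemma eLpNorm_mul_exp_sub_of_map_eq_gaussianReal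
    (hδ : ∀ h : H, P.map (δ h) = gaussianReal 0 (‖h‖₊ ^ 2)) (h : H) {b : ℝ} (hb : 0 ≤ b)
    (s : ℝ) {p : ℝ} (hp : 0 < p) :
    eLpNorm (fun ω => b * exp (δ h ω - s)) (ENNReal.ofReal p) P
      = ENNReal.ofReal (b * exp (p * ‖h‖ ^ 2 / 2 - s)) := by
  have hfun : (fun ω => b * exp (δ h ω - s)) = (b * exp (-s)) • fun ω => exp (δ h ω) := by
    ext ω
    simp only [Pi.smul_apply, smul_eq_mul, sub_eq_add_neg, exp_add]
    ring
  rw [hfun, eLpNorm_const_smul, eLpNorm_exp_of_map_eq_gaussianReal (hδ h) hp,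
    Real.enorm_eq_ofReal (by positivity), ← ofReal_mul (by positivity), mul_assoc, ← exp_add]
  congr 3
  push_cast
  ring

lemma eLpNorm_exp_add_exp_neg_mul_stochExp_le
    (hδ : ∀ h : H, P.map (δ h) = gaussianReal 0 (‖h‖₊ ^ 2)) (h : H) {v : H} (hv : ‖v‖ ≤ 1)
    {l c : ℝ} (hl : 0 ≤ l) (hc : 0 ≤ c) {p : ℝ} (hp : 1 ≤ p) :
    eLpNorm (fun ω => (l * (exp (δ v ω) + exp (-δ v ω)) + c) * stochExp δ h ω)
        (ENNReal.ofReal p) P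
      ≤ ENNReal.ofReal
          (2 * l * exp (p * (‖h‖ + 1) ^ 2 / 2) + c * exp ((p - 1) * ‖h‖ ^ 2 / 2)) := by
  have hp0 : 0 < p := by linarith
  have hmeas : ∀ (k : H) (b s : ℝ), AEStronglyMeasurable (fun ω => b * exp (δ k ω - s)) P :=
    fun k b s => by
      have := aemeasurable_of_map_eq_gaussianReal (hδ k)
      fun_prop
  have hsplit : (fun ω => (l * (exp (δ v ω) + exp (-δ v ω)) + c) * stochExp δ h ω)
      = (fun ω => l * exp (δ (h + v) ω - ‖h‖ ^ 2 / 2))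
        + (fun ω => l * exp (δ (h - v) ω - ‖h‖ ^ 2 / 2))
        + fun ω => c * exp (δ h ω - ‖h‖ ^ 2 / 2) := by
    ext ω
    simp only [stochExp, Pi.add_apply, Pi.neg_apply, map_add, map_neg, sub_eq_add_neg, exp_add]
    ring
  have hexponent : ∀ w : H, ‖w‖ ≤ ‖h‖ + 1 →
      p * ‖w‖ ^ 2 / 2 - ‖h‖ ^ 2 / 2 ≤ p * (‖h‖ + 1) ^ 2 / 2 := fun w hw => by
    have hsq : ‖w‖ ^ 2 ≤ (‖h‖ + 1) ^ 2 := pow_le_pow_left₀ (norm_nonneg w) hw 2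
    nlinarith [mul_le_mul_of_nonneg_left hsq hp0.le, sq_nonneg ‖h‖]
  have hp1 : 1 ≤ ENNReal.ofReal p := ENNReal.one_le_ofReal.mpr hp
  rw [hsplit]
  calc _ ≤ eLpNorm (fun ω => l * exp (δ (h + v) ω - ‖h‖ ^ 2 / 2)) (ENNReal.ofReal p) P
        + eLpNorm (fun ω => l * exp (δ (h - v) ω - ‖h‖ ^ 2 / 2)) (ENNReal.ofReal p) P
        + eLpNorm (fun ω => c * exp (δ h ω - ‖h‖ ^ 2 / 2)) (ENNReal.ofReal p) P := by
        have hplus := hmeas (h + v) l (‖h‖ ^ 2 / 2)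
        have hminus := hmeas (h - v) l (‖h‖ ^ 2 / 2)
        have hcentre := hmeas h c (‖h‖ ^ 2 / 2)
        refine (eLpNorm_add_le (hplus.add hminus) hcentre hp1).trans ?_
        gcongr
        exact eLpNorm_add_le hplus hminus hp1
    _ ≤ ENNReal.ofReal (l * exp (p * (‖h‖ + 1) ^ 2 / 2))
        + ENNReal.ofReal (l * exp (p * (‖h‖ + 1) ^ 2 / 2))
        + ENNReal.ofReal (c * exp ((p - 1) * ‖h‖ ^ 2 / 2)) := by
        rw [eLpNorm_mul_exp_sub_of_map_eq_gaussianReal hδ _ hl _ hp0,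
          eLpNorm_mul_exp_sub_of_map_eq_gaussianReal hδ _ hl _ hp0,
          eLpNorm_mul_exp_sub_of_map_eq_gaussianReal hδ _ hc _ hp0]
        gcongr
        · exact hexponent (h + v) ((norm_add_le _ _).trans (by linarith))
        · exact hexponent (h - v) ((norm_sub_le _ _).trans (by linarith))
        · exact le_of_eq (by ring_nf)
    _ = _ := by
        rw [← ofReal_add (by positivity) (by positivity),
          ← ofReal_add (by positivity) (by positivity)]
        ring_nf

lemma eLpNorm_stochExp_sub_stochExp_le
    (hδ : ∀ h : H, P.map (δ h) = gaussianReal 0 (‖h‖₊ ^ 2)) (f g : H) {p : ℝ} (hp : 1 ≤ p) :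
    eLpNorm (fun ω => stochExp δ f ω - stochExp δ g ω) (ENNReal.ofReal p) P
      ≤ ENNReal.ofReal
          (2 * ‖f - g‖ * exp (p * (‖f‖ + 1) ^ 2 / 2)
              + (‖f - g‖ * ‖g‖ + ‖f - g‖ ^ 2 / 2) * exp ((p - 1) * ‖f‖ ^ 2 / 2)
            + (2 * ‖f - g‖ * exp (p * (‖g‖ + 1) ^ 2 / 2)
              + (‖f - g‖ * ‖g‖ + ‖f - g‖ ^ 2 / 2) * exp ((p - 1) * ‖g‖ ^ 2 / 2))) := by
  have hnormsq := abs_norm_sq_sub_norm_sq_le f g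
  set l := ‖f - g‖
  set c := l * ‖g‖ + l ^ 2 / 2
  set v := l⁻¹ • (f - g)
  have hv : ‖v‖ ≤ 1 := by
    rw [norm_smul, norm_inv, norm_norm]
    exact inv_mul_le_one
  have hδv : ∀ ω, δ f ω - δ g ω = l * δ v ω := fun ω => by
    have hlv : l • v = f - g := by
      rcases eq_or_ne l 0 with hl | hl
      · rw [hl, zero_smul, eq_comm, ← norm_eq_zero]
        exact hl
      · exact smul_inv_smul₀ hl _
    rw [← Pi.sub_apply, ← map_sub, ← hlv, map_smul, Pi.smul_apply, smul_eq_mul]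
  set D : Ω → ℝ := fun ω => l * (exp (δ v ω) + exp (-δ v ω)) + c
  have hpointwise : ∀ ω, ‖stochExp δ f ω - stochExp δ g ω‖
      ≤ D ω * stochExp δ f ω + D ω * stochExp δ g ω := fun ω => by
    have hexponent : |(δ f ω - ‖f‖ ^ 2 / 2) - (δ g ω - ‖g‖ ^ 2 / 2)| ≤ D ω := by
      have hsplit : (δ f ω - ‖f‖ ^ 2 / 2) - (δ g ω - ‖g‖ ^ 2 / 2)
          = l * δ v ω - (‖f‖ ^ 2 - ‖g‖ ^ 2) / 2 := by rw [← hδv]; ring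
      have hnorms : |(‖f‖ ^ 2 - ‖g‖ ^ 2) / 2| ≤ c := by
        rw [abs_div, abs_two]
        simp only [c]
        linarith
      rw [hsplit]
      refine (abs_sub _ _).trans (add_le_add ?_ hnorms)
      rw [abs_mul, abs_norm]
      exact mul_le_mul_of_nonneg_left (abs_le_exp_add_exp_neg _) (norm_nonneg _)
    rw [Real.norm_eq_abs, ← mul_add, stochExp, stochExp]
    exact (abs_exp_sub_exp_le _ _).trans (mul_le_mul_of_nonneg_right hexponent (by positivity))
  have hmeas : ∀ h : H, AEStronglyMeasurable (fun ω => D ω * stochExp δ h ω) P :=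
    fun h => by
      have := aemeasurable_of_map_eq_gaussianReal (hδ h)
      have := aemeasurable_of_map_eq_gaussianReal (hδ v)
      unfold stochExp
      fun_prop
  have hl : 0 ≤ l := norm_nonneg _
  have hc : 0 ≤ c := by positivity
  calc _ ≤ eLpNorm ((fun ω => D ω * stochExp δ f ω) + fun ω => D ω * stochExp δ g ω)
          (ENNReal.ofReal p) P :=
        eLpNorm_mono_real hpointwise
    _ ≤ eLpNorm (fun ω => D ω * stochExp δ f ω) (ENNReal.ofReal p) P
          + eLpNorm (fun ω => D ω * stochExp δ g ω) (ENNReal.ofReal p) P :=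
        eLpNorm_add_le (hmeas f) (hmeas g) (ENNReal.one_le_ofReal.mpr hp)
    _ ≤ _ := by
        rw [ofReal_add (by positivity) (by positivity)]
        exact add_le_add (eLpNorm_exp_add_exp_neg_mul_stochExp_le hδ f hv hl hc hp)
          (eLpNorm_exp_add_exp_neg_mul_stochExp_le hδ g hv hl hc hp)

end Wiener

/-- For `f, g ∈ L²([0,T])` and `p ≥ 1`,
`‖E(f) − E(g)‖_{L^p} ≤ C·S_p(|f − g|)`, where `E(h) = exp(δ(h) − |h|²/2)` is the
stochastic exponential and `C` depends only on `p` and `|g|`. -/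
theorem lpNorm_stochExp_sub_stochExp :
    ∃ C : ℝ → ℝ → ℝ, ∀ p : ℝ, 1 ≤ p →
      ∀ (H : Type) (_ : NormedAddCommGroup H) (_ : InnerProductSpace ℝ H)
        (Ω : Type) (_ : MeasurableSpace Ω) (P : Measure Ω),
        IsProbabilityMeasure P →
        ∀ (δ : H →ₗ[ℝ] Ω → ℝ),
          (∀ h : H, Measure.map (δ h) P = gaussianReal 0 (‖h‖₊ ^ 2)) →
          ∀ f g : H,
            0 < C p ‖g‖ ∧
            eLpNorm
                (fun ω => Real.exp (δ f ω - ‖f‖ ^ 2 / 2)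
                  - Real.exp (δ g ω - ‖g‖ ^ 2 / 2))
                (ENNReal.ofReal p) P
              ≤ ENNReal.ofReal (C p ‖g‖ * Spoly p ‖f - g‖) := by
  refine ⟨fun p G => (5 + 2 * G) * exp (p * (1 + G) ^ 2),
    fun p hp H _ _ Ω _ P _ δ hδ f g => ⟨by positivity, ?_⟩⟩
  refine (eLpNorm_stochExp_sub_stochExp_le hδ f g hp).trans (ofReal_le_ofReal ?_)
  have hf := two_mul_exp_add_mul_exp_le hp (norm_nonneg (f - g)) (norm_nonneg g) (norm_nonneg f)
    (norm_le_norm_add_norm_sub' f g)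
  have hg := two_mul_exp_add_mul_exp_le hp (norm_nonneg (f - g)) (norm_nonneg g) (norm_nonneg g)
    (le_add_of_nonneg_right (norm_nonneg (f - g)))
  have hS := mul_le_mul_of_nonneg_left (mul_exp_le_Spoly p ‖f - g‖)
    (by positivity : 0 ≤ (5 + 2 * ‖g‖) * exp (p * (1 + ‖g‖) ^ 2))
  linarith
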